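/- Let ℰ = (0,1) with Lebesgue measure. For every ζ > 0, the integral operator on L²(0,1) with weak kernel κ^weak(a,b) = (max(a,b))^{-1-ζ} has infinite L²→L² operator norm. Specifically, for f(a) = a^{ζ−1/2} ∈ L²(0,1), one has (𝒦f)(a) = (1/(ζ+1/2)) a^{-1/2} + 2(a^{-1/2} − 1), which is not in L²(0,1). -/

import Mathlib

open MeasureTheory
open scoped ENNReal

/-- Lebesgue measure on the mark space `ℰ = (0,1)`. -/
noncomputable def markMeasure : Measure ℝ := volume.restrict (Set.Ioo (0:ℝ) 1)

/-- The `L²(0,1) → L²(0,1)` operator norm (valued in `[0,∞]`) of the integral operator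
`(𝒦f)(a) = ∫₀¹ κ(a,b) f(b) db`: the supremum of `‖𝒦f‖₂/‖f‖₂` over nonzero `f ∈ L²`. -/
noncomputable def kernelOpNorm2 (κ : ℝ → ℝ → ℝ) : ℝ≥0∞ :=
  ⨆ f : { f : ℝ → ℝ // MemLp f 2 markMeasure ∧ eLpNorm f 2 markMeasure ≠ 0 },
    eLpNorm (fun a => ∫ b, κ a b * f.1 b ∂markMeasure) 2 markMeasure
      / eLpNorm f.1 2 markMeasure

/-!
Split `∫₀¹ max(a,b)^{-1-ζ} b^{ζ-1/2} db` at `b = a`: on `(0,a)` the kernel is the constant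
`a^{-1-ζ}` and the integrand is integrable because `ζ - 1/2 > -1`; on `(a,1)` it is `b^{-3/2}`,
whose integral blows up like `2 a^{-1/2}`. So `𝒦f` behaves like a multiple of `a^{-1/2}`, which is
not square integrable near `0`, while `f = a^{ζ-1/2}` is; the quotient `‖𝒦f‖₂/‖f‖₂` is then `∞`.
-/

open Set

instance : IsProbabilityMeasure markMeasure := ⟨by simp [markMeasure]⟩

lemma ae_mem_Ioo_markMeasure : ∀ᵐ a ∂markMeasure, a ∈ Ioo (0:ℝ) 1 :=
  ae_restrict_mem measurableSet_Ioo

lemma integral_markMeasure_eq_intervalIntegral (g : ℝ → ℝ) :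
    ∫ b, g b ∂markMeasure = ∫ b in (0:ℝ)..1, g b := by
  rw [intervalIntegral.integral_of_le zero_le_one, integral_Ioc_eq_integral_Ioo, markMeasure]

lemma memLp_rpow_iff {r : ℝ} : MemLp (fun a : ℝ => a ^ r) 2 markMeasure ↔ -1 < 2 * r := by
  rw [memLp_two_iff_integrable_sq (by fun_prop : Measurable fun a : ℝ => a ^ r).aestronglyMeasurable,
    ← intervalIntegral.integrableOn_Ioo_rpow_iff one_pos]
  refine integrable_congr ?_
  filter_upwards [ae_mem_Ioo_markMeasure] with a ha
  rw [sq, ← Real.rpow_add ha.1, two_mul]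

lemma memLp_const_mul_rpow_add_const_iff {c d r : ℝ} (hc : c ≠ 0) :
    MemLp (fun a : ℝ => c * a ^ r + d) 2 markMeasure ↔ -1 < 2 * r := by
  rw [← memLp_rpow_iff]
  refine ⟨fun h => ?_, fun h => (h.const_mul c).add (memLp_const d)⟩
  convert (h.sub (memLp_const d)).const_mul c⁻¹ using 2 with a
  simp only [Pi.sub_apply, add_sub_cancel_right]
  field_simp

lemma eLpNorm_rpow_ne_zero (r : ℝ) : eLpNorm (fun a : ℝ => a ^ r) 2 markMeasure ≠ 0 := by
  rw [Ne, eLpNorm_eq_zero_iff (by fun_prop : Measurable fun a : ℝ => a ^ r).aestronglyMeasurable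
    two_ne_zero]
  intro h
  obtain ⟨a, ha0, ha⟩ := (h.and ae_mem_Ioo_markMeasure).exists
  exact (Real.rpow_pos_of_pos ha.1 r).ne' ha0

lemma integral_max_rpow_mul_rpow {s t a : ℝ} (ht : -1 < t) (hst : s + t ≠ -1)
    (ha : a ∈ Ioo (0:ℝ) 1) :
    ∫ b, max a b ^ s * b ^ t ∂markMeasure
      = a ^ (s + t + 1) / (t + 1) + (1 - a ^ (s + t + 1)) / (s + t + 1) := by
  have h0 : (0:ℝ) ∉ uIcc a 1 := by
    rw [uIcc_of_le ha.2.le]; exact fun h => ha.1.not_ge h.1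
  have hlow : EqOn (fun b => max a b ^ s * b ^ t) (fun b => a ^ s * b ^ t) (uIcc 0 a) := by
    intro b hb
    rw [uIcc_of_le ha.1.le] at hb
    simp only [max_eq_left hb.2]
  have hhigh : EqOn (fun b => max a b ^ s * b ^ t) (fun b => b ^ (s + t)) (uIcc a 1) := by
    intro b hb
    rw [uIcc_of_le ha.2.le] at hb
    simp only [max_eq_right hb.1, Real.rpow_add (ha.1.trans_le hb.1)]
  have hint_low : IntervalIntegrable (fun b => max a b ^ s * b ^ t) volume 0 a :=
    ((intervalIntegral.intervalIntegrable_rpow' ht).const_mul _).congr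
      (hlow.symm.mono uIoc_subset_uIcc)
  have hint_high : IntervalIntegrable (fun b => max a b ^ s * b ^ t) volume a 1 :=
    (intervalIntegral.intervalIntegrable_rpow (Or.inr h0)).congr
      (hhigh.symm.mono uIoc_subset_uIcc)
  rw [integral_markMeasure_eq_intervalIntegral,
    ← intervalIntegral.integral_add_adjacent_intervals hint_low hint_high,
    intervalIntegral.integral_congr hlow, intervalIntegral.integral_congr hhigh,
    intervalIntegral.integral_const_mul, integral_rpow (Or.inl ht),
    integral_rpow (Or.inr ⟨hst, h0⟩), Real.zero_rpow (by linarith), Real.one_rpow,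
    add_assoc s t 1, Real.rpow_add ha.1 s]
  ring

lemma kernelOpNorm2_eq_top_of_eLpNorm_eq_top {κ : ℝ → ℝ → ℝ} {f : ℝ → ℝ}
    (hf : MemLp f 2 markMeasure) (hf0 : eLpNorm f 2 markMeasure ≠ 0)
    (hKf : eLpNorm (fun a => ∫ b, κ a b * f b ∂markMeasure) 2 markMeasure = ⊤) :
    kernelOpNorm2 κ = ⊤ := by
  refine eq_top_iff.2 (le_trans ?_ (le_iSup _ ⟨f, hf, hf0⟩))
  simp [hKf, ENNReal.top_div, hf.eLpNorm_ne_top]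

/-- Weak kernel `κ(a,b) = (max a b)^{-1-ζ}` on `(0,1)`: for every `ζ > 0` the operator norm
is infinite. Specifically `f(a) = a^{ζ-1/2}` lies in `L²(0,1)`, and
`(𝒦f)(a) = (1/(ζ+1/2)) a^{-1/2} + 2(a^{-1/2} − 1)`, which is not in `L²(0,1)`. -/
theorem weakKernel_opNorm_top (ζ : ℝ) (hζ : 0 < ζ) :
    MemLp (fun a : ℝ => a ^ (ζ - 1/2)) 2 markMeasure ∧
    (∀ a ∈ Set.Ioo (0:ℝ) 1,
      ∫ b, (max a b) ^ (-1 - ζ) * b ^ (ζ - 1/2) ∂markMeasure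
        = (1 / (ζ + 1/2)) * a ^ (-(1:ℝ)/2) + 2 * (a ^ (-(1:ℝ)/2) - 1)) ∧
    ¬ MemLp (fun a : ℝ => ∫ b, (max a b) ^ (-1 - ζ) * b ^ (ζ - 1/2) ∂markMeasure)
        2 markMeasure ∧
    kernelOpNorm2 (fun a b => (max a b) ^ (-1 - ζ)) = ⊤ := by
  have hf : MemLp (fun a : ℝ => a ^ (ζ - 1/2)) 2 markMeasure := memLp_rpow_iff.2 (by linarith)
  have hKf : ∀ a ∈ Ioo (0:ℝ) 1, ∫ b, (max a b) ^ (-1 - ζ) * b ^ (ζ - 1/2) ∂markMeasure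
      = (1 / (ζ + 1/2)) * a ^ (-(1:ℝ)/2) + 2 * (a ^ (-(1:ℝ)/2) - 1) := by
    intro a ha
    have hexp : -1 - ζ + (ζ - 1/2) + 1 = -(1:ℝ)/2 := by ring
    rw [integral_max_rpow_mul_rpow (by linarith) (by linarith) ha, hexp]
    ring
  have hKf_ae : (fun a => ∫ b, (max a b) ^ (-1 - ζ) * b ^ (ζ - 1/2) ∂markMeasure)
      =ᵐ[markMeasure] fun a => (1 / (ζ + 1/2) + 2) * a ^ (-(1:ℝ)/2) + -2 := by
    filter_upwards [ae_mem_Ioo_markMeasure] with a ha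
    rw [hKf a ha]
    ring
  have hKf_notMemLp : ¬ MemLp (fun a : ℝ =>
      ∫ b, (max a b) ^ (-1 - ζ) * b ^ (ζ - 1/2) ∂markMeasure) 2 markMeasure := by
    rw [memLp_congr_ae hKf_ae, memLp_const_mul_rpow_add_const_iff (by positivity)]
    norm_num
  refine ⟨hf, hKf, hKf_notMemLp,
    kernelOpNorm2_eq_top_of_eLpNorm_eq_top hf (eLpNorm_rpow_ne_zero _) ?_⟩
  by_contra h
  exact hKf_notMemLp ⟨AEStronglyMeasurable.congr (by fun_prop) hKf_ae.symm, lt_top_iff_ne_top.2 h⟩
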